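/- For every natural number n ≥ 2, ψ(n(n-1)/2 + 2) = n + 1; that is, every surjective colouring Δ : ℕ^(2) ↠ [n(n-1)/2 + 2] satisfies |F_Δ| ≥ n + 1, and some such surjective colouring satisfies |F_Δ| = n + 1. -/

import Mathlib

/-- The colour of the unordered edge `{x, y}` (only values on distinct pairs matter). -/
def edgeCol (Δ : ℕ → ℕ → ℕ) (x y : ℕ) : ℕ := Δ (min x y) (max x y)

/-- `colourSet Δ X` is the set of colours attained by `Δ` on edges with both endpoints in `X`. -/
def colourSet (Δ : ℕ → ℕ → ℕ) (X : Set ℕ) : Set ℕ :=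
  {c | ∃ x ∈ X, ∃ y ∈ X, x ≠ y ∧ edgeCol Δ x y = c}

/-- `Δ` is a surjective colouring `ℕ^(2) ↠ [k]` of the edges of the complete
graph on `ℕ` with colour set `[k] = {1, …, k}`. -/
def IsColouring (Δ : ℕ → ℕ → ℕ) (k : ℕ) : Prop :=
  (∀ x y : ℕ, x ≠ y → edgeCol Δ x y ∈ Finset.Icc 1 k) ∧
  (∀ c ∈ Finset.Icc 1 k, ∃ x y : ℕ, x ≠ y ∧ edgeCol Δ x y = c)

/-- `F_Δ`: the set of `m ∈ [k]` for which some infinite `X ⊆ ℕ` is exactly `m`-coloured. -/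
def FSet (Δ : ℕ → ℕ → ℕ) (k : ℕ) : Set ℕ :=
  {m | m ∈ Finset.Icc 1 k ∧ ∃ X : Set ℕ, X.Infinite ∧ (colourSet Δ X).ncard = m}

/-- `ψ k`: the minimum of `|F_Δ|` over all surjective colourings `Δ : ℕ^(2) ↠ [k]`. -/
noncomputable def psi (k : ℕ) : ℕ :=
  sInf {m | ∃ Δ : ℕ → ℕ → ℕ, IsColouring Δ k ∧ (FSet Δ k).ncard = m}

/-!
Lower bound. By Ramsey's theorem (proved with a non-principal ultrafilter) there is an infinite
set `Y` on which `Δ` is constant, say `γ`, and which each vertex `a` of a finite set `T` meeting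
all `k` colours sees in a single colour `l a`. For `S ⊆ T` the colours on `Y ∪ S` are `γ`, the
colours `l a` (`a ∈ S`) and the colours inside `S`; their numbers all lie in `F_Δ`. If `v' < v`
are consecutive such numbers and `j` of them are at most `v'`, then `v ≤ v' + j`. Indeed, for a
smallest `S` with more than `v'` colours, deleting any vertex of `S` loses more than `j` colours,
while a colour can only be lost by deleting one of at most two vertices. Double counting rules out
`#S ≥ j + 2`; and if `#S = j + 1`, every deletion loses the colour `l a`, so a chain of subsets
of `S` realises `#S + 1` distinct numbers, more than the `j + 1` available. Hence the `r`-th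
number is at most `1 + r(r-1)/2`, and `k = C(n,2) + 2` forces `r ≥ n + 1`.

Upper bound. Colour `{x, y}` by `1` if `x ≡ y [MOD n]`, by pairwise distinct colours `3, …, k`
if `x ≠ y < n`, and by `2` otherwise. An infinite set sees one colour if it lies in a residue
class, and `2 + C(m, 2)` colours if it meets two classes and `m` of the vertices `0, …, n - 1`.
-/

open Filter Finset

theorem exists_infinite_forall_lt_of_eventually {U : Ultrafilter ℕ}
    (hU : (U : Filter ℕ) ≤ cofinite) {P : ℕ → ℕ → Prop} (h : ∀ᶠ x in U, ∀ᶠ y in U, P x y)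
    {s : Set ℕ} (hs : s ∈ U) : ∃ Y ⊆ s, Y.Infinite ∧ ∀ x ∈ Y, ∀ y ∈ Y, x < y → P x y := by
  let G := s ∩ {x | ∀ᶠ y in U, P x y}
  let A : ℕ → Set ℕ := fun n =>
    Nat.rec (motive := fun _ => Set ℕ) G (fun _ B => (B ∩ {y | P (sInf B) y}) \ {sInf B}) n
  have hA : ∀ n, A n ∈ U ∧ A n ⊆ G := by
    intro n
    induction n with
    | zero => exact ⟨inter_mem hs h, subset_rfl⟩
    | succ n ih =>
      have hmem : sInf (A n) ∈ A n := Nat.sInf_mem (U.nonempty_of_mem ih.1)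
      exact ⟨sdiff_mem (inter_mem ih.1 (ih.2 hmem).2)
        (hU (Set.finite_singleton _).compl_mem_cofinite), fun x hx => ih.2 hx.1.1⟩
  have hx : ∀ n, sInf (A n) ∈ A n := fun n => Nat.sInf_mem (U.nonempty_of_mem (hA n).1)
  have hanti : Antitone A := antitone_nat_of_succ_le fun n x hx => hx.1.1
  have hmono : StrictMono fun n => sInf (A n) := strictMono_nat_of_lt_succ fun n =>
    (Nat.sInf_le (hanti n.le_succ (hx (n + 1)))).lt_of_ne fun h => (hx (n + 1)).2 h.symm
  refine ⟨Set.range fun n => sInf (A n), ?_, Set.infinite_range_of_injective hmono.injective, ?_⟩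
  · rintro _ ⟨n, rfl⟩
    exact ((hA n).2 (hx n)).1
  · rintro _ ⟨m, rfl⟩ _ ⟨n, rfl⟩ hlt
    exact (hanti (hmono.lt_iff_lt.1 hlt) (hx n)).1.2

theorem exists_infinite_homogeneous_of_finite {β : Type*} {c : ℕ → ℕ → β}
    (hc : ∀ x y, c x y = c y x) {s : Set β} (hs : s.Finite) (hcs : ∀ x y, x ≠ y → c x y ∈ s)
    (T : Finset ℕ) :
    ∃ (Y : Set ℕ) (γ : β) (l : ℕ → β), Y.Infinite ∧ Y.Pairwise (fun x y => c x y = γ) ∧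
      ∀ a ∈ T, a ∉ Y ∧ ∀ y ∈ Y, c a y = l a := by
  let U := hyperfilter ℕ
  have hU : (U : Filter ℕ) ≤ cofinite := hyperfilter_le_cofinite
  have hne : ∀ x, ∀ᶠ y in U, x ≠ y := fun x =>
    ((eventually_cofinite_ne x).filter_mono hU).mono fun _ h => Ne.symm h
  choose l hl using fun x =>
    ((Ultrafilter.eventually_exists_mem_iff hs (P := fun b y => c x y = b)).1
      ((hne x).mono fun y hy => ⟨c x y, hcs x y hy, rfl⟩)).imp fun _ h => h.2
  have hls : ∀ x, l x ∈ s := fun x =>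
    let ⟨y, hy, hy'⟩ := ((hl x).and (hne x)).exists
    hy ▸ hcs x y hy'
  obtain ⟨γ, -, hγ⟩ := (Ultrafilter.eventually_exists_mem_iff hs (P := fun b x => l x = b)).1
    (Eventually.of_forall fun x => ⟨l x, hls x, rfl⟩)
  have hT : ∀ᶠ y in U, ∀ a ∈ T, a ≠ y ∧ c a y = l a :=
    (eventually_all_finset T).2 fun a _ => (hne a).and (hl a)
  obtain ⟨Y, hYT, hY, hYγ⟩ := exists_infinite_forall_lt_of_eventually hU
    (hγ.mono fun x hx => (hl x).mono fun y hy => hy.trans hx) hT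
  refine ⟨Y, γ, l, hY, fun x hx y hy hxy => ?_, fun a ha => ⟨fun haY => (hYT haY a ha).1 rfl,
    fun y hy => (hYT hy a ha).2⟩⟩
  rcases hxy.lt_or_gt with h | h
  · exact hYγ x hx y hy h
  · exact (hc x y).trans (hYγ y hy x hx h)

theorem two_mul_le_of_forall_exists_le {V : Finset ℕ} (h1 : 1 ∈ V)
    (hgap : ∀ v ∈ V, 2 * v ≤ 2 + #{w ∈ V | w ≤ v} * (#{w ∈ V | w ≤ v} - 1) →
      ∀ w ∈ V, v < w → ∃ u ∈ V, v < u ∧ u ≤ v + #{w ∈ V | w ≤ v}) :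
    ∀ v ∈ V, 2 * v ≤ 2 + #{w ∈ V | w ≤ v} * (#{w ∈ V | w ≤ v} - 1) := by
  intro v
  induction v using Nat.strong_induction_on with
  | _ v ih =>
  intro hv
  rcases Nat.lt_or_ge v 2 with hv2 | hv2
  · omega
  obtain ⟨v', hv', hmax⟩ := exists_max_image {w ∈ V | w < v} id
    ⟨1, mem_filter.2 ⟨h1, by omega⟩⟩
  obtain ⟨hv'V, hv'v⟩ := mem_filter.1 hv'
  have hr : #{w ∈ V | w ≤ v} = #{w ∈ V | w ≤ v'} + 1 := by
    rw [← card_insert_of_notMem (s := {w ∈ V | w ≤ v'}) (a := v) (by simp; omega)]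
    congr 1
    ext w
    simp only [mem_filter, mem_insert]
    constructor
    · rintro ⟨hw, hwv⟩
      rcases hwv.eq_or_lt with rfl | hwv
      exacts [.inl rfl, .inr ⟨hw, hmax w (mem_filter.2 ⟨hw, hwv⟩)⟩]
    · rintro (rfl | ⟨hw, hwv'⟩)
      exacts [⟨hv, le_rfl⟩, ⟨hw, by omega⟩]
  have ih := ih v' hv'v hv'V
  obtain ⟨u, hu, hv'u, huj⟩ := hgap v' hv'V ih v hv hv'v
  have hvu : v ≤ u := not_lt.1 fun huv => (hmax u (mem_filter.2 ⟨hu, huv⟩)).not_gt hv'u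
  have hj : 0 < #{w ∈ V | w ≤ v'} := card_pos.2 ⟨v', mem_filter.2 ⟨hv'V, le_rfl⟩⟩
  rw [hr]
  generalize #{w ∈ V | w ≤ v'} = j at hj ih huj
  obtain ⟨i, rfl⟩ : ∃ i, j = i + 1 := ⟨j - 1, by omega⟩
  simp only [Nat.add_sub_cancel] at ih ⊢
  nlinarith

section LimitColours

variable {α β : Type*} [DecidableEq β] (γ : β) (l : α → β) (c : α → α → β)

/-- The colours on `S ∪ Y` when `Y` is an infinite set disjoint from `S` all of whose edges have
colour `γ`, and every edge between `a ∈ S` and `Y` has colour `l a`. -/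
def limitColours (S : Finset α) : Finset β :=
  insert γ (S.image l ∪ S.offDiag.image fun p => c p.1 p.2)

def limitCounts (T : Finset α) : Finset ℕ :=
  T.powerset.image fun S => #(limitColours γ l c S)

variable {γ l c} {S T : Finset α} {a : α} {δ : β}

theorem mem_limitColours : δ ∈ limitColours γ l c S ↔
    δ = γ ∨ (∃ x ∈ S, l x = δ) ∨ ∃ x ∈ S, ∃ y ∈ S, x ≠ y ∧ c x y = δ := by
  simp [limitColours, and_assoc]

theorem limitColours_mono : Monotone (limitColours γ l c) := fun S T hST δ => by
  simp only [mem_limitColours]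
  rintro (h | ⟨x, hx, h⟩ | ⟨x, hx, y, hy, h⟩)
  exacts [.inl h, .inr (.inl ⟨x, hST hx, h⟩), .inr (.inr ⟨x, hST hx, y, hST hy, h⟩)]

theorem limitColours_empty : limitColours γ l c ∅ = {γ} := by
  simp [limitColours]

theorem mem_limitColours_self : γ ∈ limitColours γ l c S :=
  mem_insert_self _ _

theorem limitCounts_mono : Monotone (limitCounts γ l c) := fun _ _ h =>
  image_subset_image (powerset_mono.2 h)

theorem one_le_of_mem_limitCounts {v : ℕ} (hv : v ∈ limitCounts γ l c T) : 1 ≤ v := by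
  obtain ⟨S, -, rfl⟩ := mem_image.1 hv
  exact card_pos.2 ⟨γ, mem_limitColours_self⟩

theorem sdiff_limitColours_erase_subset [DecidableEq α] (hc : ∀ x y, c x y = c y x) :
    limitColours γ l c S \ limitColours γ l c (S.erase a) ⊆
      insert (l a) ((S.erase a).image (c a)) := by
  intro δ hδ
  obtain ⟨hδS, hδa⟩ := mem_sdiff.1 hδ
  simp only [mem_insert, mem_image, mem_erase]
  rcases mem_limitColours.1 hδS with h | ⟨x, hx, h⟩ | ⟨x, hx, y, hy, hxy, h⟩
  · exact absurd (h ▸ mem_limitColours_self) hδa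
  · by_cases hxa : x = a
    · exact .inl (hxa ▸ h.symm)
    · exact absurd (mem_limitColours.2 (.inr (.inl ⟨x, mem_erase.2 ⟨hxa, hx⟩, h⟩))) hδa
  · by_cases hxa : x = a
    · exact .inr ⟨y, ⟨hxa ▸ hxy.symm, hy⟩, hxa ▸ h⟩
    by_cases hya : y = a
    · exact .inr ⟨x, ⟨hxa, hx⟩, hya ▸ (hc y x).trans h⟩
    exact absurd (mem_limitColours.2 (.inr (.inr
      ⟨x, mem_erase.2 ⟨hxa, hx⟩, y, mem_erase.2 ⟨hya, hy⟩, hxy, h⟩))) hδa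

theorem card_sdiff_limitColours_erase_le [DecidableEq α] (hc : ∀ x y, c x y = c y x) (ha : a ∈ S) :
    #(limitColours γ l c S \ limitColours γ l c (S.erase a)) ≤ #S :=
  calc _ ≤ #(insert (l a) ((S.erase a).image (c a))) :=
        card_le_card (sdiff_limitColours_erase_subset hc)
    _ ≤ #(S.erase a) + 1 := (card_insert_le _ _).trans (by gcongr; exact card_image_le)
    _ = #S := card_erase_add_one ha

theorem notMem_limitColours_erase [DecidableEq α] (hc : ∀ x y, c x y = c y x) (ha : a ∈ S)
    (h : #S ≤ #(limitColours γ l c S \ limitColours γ l c (S.erase a))) :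
    l a ∉ limitColours γ l c (S.erase a) := by
  intro hla
  have hsub : limitColours γ l c S \ limitColours γ l c (S.erase a) ⊆ (S.erase a).image (c a) :=
    fun δ hδ => (mem_insert.1 (sdiff_limitColours_erase_subset hc hδ)).resolve_left
      fun h => (mem_sdiff.1 hδ).2 (h ▸ hla)
  have := (card_le_card hsub).trans card_image_le
  rw [card_erase_of_mem ha] at this
  have := card_pos.2 ⟨a, ha⟩
  omega

theorem card_filter_mem_sdiff_limitColours_erase_le_two [DecidableEq α] (δ : β) :
    #{a ∈ S | δ ∈ limitColours γ l c S \ limitColours γ l c (S.erase a)} ≤ 2 := by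
  by_cases hδ : δ ∈ limitColours γ l c S
  swap
  · simp [hδ]
  obtain ⟨t, ht, hts⟩ : ∃ t : Finset α, #t ≤ 2 ∧
      ∀ b ∈ S, b ∉ t → δ ∈ limitColours γ l c (S.erase b) := by
    rcases mem_limitColours.1 hδ with h | ⟨x, hx, h⟩ | ⟨x, hx, y, hy, hxy, h⟩
    · exact ⟨∅, by simp, fun b _ _ => h ▸ mem_limitColours_self⟩
    · refine ⟨{x}, by simp, fun b _ hb => mem_limitColours.2 (.inr (.inl ⟨x, ?_, h⟩))⟩
      exact mem_erase.2 ⟨fun hxb => hb (by simp [hxb]), hx⟩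
    · refine ⟨{x, y}, card_le_two, fun b _ hb => mem_limitColours.2 (.inr (.inr
        ⟨x, mem_erase.2 ⟨?_, hx⟩, y, mem_erase.2 ⟨?_, hy⟩, hxy, h⟩))⟩
      · rintro rfl; simp at hb
      · rintro rfl; simp at hb
  refine (card_le_card fun b hb => ?_).trans ht
  obtain ⟨hbS, hb⟩ := mem_filter.1 hb
  by_contra hbt
  exact (mem_sdiff.1 hb).2 (hts b hbS hbt)

end LimitColours

section LimitCounts

variable {α β : Type*} [DecidableEq α] [DecidableEq β] {γ : β} {l : α → β} {c : α → α → β}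
  {S T : Finset α}

theorem card_add_one_le_card_limitCounts
    (h : ∀ a ∈ S, l a ∉ limitColours γ l c (S.erase a)) : #S + 1 ≤ #(limitCounts γ l c S) := by
  induction S using Finset.induction_on with
  | empty => simp [limitCounts, limitColours_empty]
  | insert a S haS ih =>
    have ih := ih fun b hb hlb => h b (mem_insert_of_mem hb)
      (limitColours_mono (erase_subset_erase b (subset_insert a S)) hlb)
    have hlt : #(limitColours γ l c S) < #(limitColours γ l c (insert a S)) := by
      refine card_lt_card ((ssubset_iff_of_subset (limitColours_mono (subset_insert a S))).2
        ⟨l a, mem_limitColours.2 (.inr (.inl ⟨a, mem_insert_self a S, rfl⟩)), ?_⟩)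
      simpa [haS] using h a (mem_insert_self a S)
    have hnew : #(limitColours γ l c (insert a S)) ∉ limitCounts γ l c S := by
      simp only [limitCounts, mem_image, mem_powerset, not_exists, not_and]
      exact fun S' hS' h' => (card_le_card (limitColours_mono hS')).not_gt (h' ▸ hlt)
    calc #(insert a S) + 1 ≤ #(limitCounts γ l c S) + 1 := by
          rw [card_insert_of_notMem haS]; omega
      _ = #(insert (#(limitColours γ l c (insert a S))) (limitCounts γ l c S)) :=
          (card_insert_of_notMem hnew).symm
      _ ≤ #(limitCounts γ l c (insert a S)) := card_le_card (insert_subset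
          (mem_image_of_mem _ (mem_powerset_self _)) (limitCounts_mono (subset_insert a S)))

theorem card_mul_le_two_mul_card_limitColours {d : ℕ}
    (hd : ∀ a ∈ S, d ≤ #(limitColours γ l c S \ limitColours γ l c (S.erase a))) :
    #S * d ≤ 2 * (#(limitColours γ l c S) - 1) := by
  have hsub : ∀ a, limitColours γ l c S \ limitColours γ l c (S.erase a) ⊆
      (limitColours γ l c S).erase γ := fun a δ hδ =>
    mem_erase.2 ⟨fun h => (mem_sdiff.1 hδ).2 (h ▸ mem_limitColours_self), (mem_sdiff.1 hδ).1⟩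
  have := card_nsmul_le_card_nsmul (R := ℕ) (m := d) (n := 2)
    (fun a δ => δ ∈ limitColours γ l c S \ limitColours γ l c (S.erase a))
    (t := (limitColours γ l c S).erase γ)
    (fun a ha => by
      rw [bipartiteAbove, filter_mem_eq_inter, inter_eq_right.2 (hsub a)]
      exact hd a ha)
    (fun δ _ => card_filter_mem_sdiff_limitColours_erase_le_two δ)
  rw [card_erase_of_mem mem_limitColours_self, smul_eq_mul, smul_eq_mul] at this
  linarith

theorem limitCounts_eq_insert :
    limitCounts γ l c S = insert #(limitColours γ l c S)
      (S.ssubsets.image fun S' => #(limitColours γ l c S')) := by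
  conv_lhs => rw [limitCounts, ← insert_erase (mem_powerset_self S)]
  rw [image_insert, ssubsets]

theorem card_limitColours_le (hc : ∀ x y, c x y = c y x) (hS : S.Nonempty) {v j : ℕ}
    (hv : ∀ S' ⊂ S, #(limitColours γ l c S') ≤ v)
    (hj : #(S.ssubsets.image fun S' => #(limitColours γ l c S')) ≤ j)
    (hvj : 2 * v ≤ 2 + j * (j - 1)) :
    #(limitColours γ l c S) ≤ v + j := by
  by_contra! hlt
  have hnew : ∀ a ∈ S, #(limitColours γ l c S) - v ≤
      #(limitColours γ l c S \ limitColours γ l c (S.erase a)) := fun a ha => by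
    rw [card_sdiff_of_subset (limitColours_mono (erase_subset a S))]
    have := hv _ (erase_ssubset ha)
    omega
  have hj1 : 1 ≤ j := hj.trans' (card_pos.2
    ⟨_, mem_image_of_mem _ (mem_ssubsets.2 (empty_ssubset.2 hS))⟩)
  obtain ⟨a, ha⟩ := hS
  have hSj : j + 1 ≤ #S := by
    have := hnew a ha
    have := card_sdiff_limitColours_erase_le (γ := γ) (l := l) hc ha
    omega
  rcases hSj.eq_or_lt with hSj | hSj
  · -- every link colour is new, so a maximal chain of subsets has `#S + 1` distinct counts
    have hchain := card_add_one_le_card_limitCounts (γ := γ) (l := l) fun b hb =>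
      notMem_limitColours_erase hc hb (by have := hnew b hb; omega)
    rw [limitCounts_eq_insert] at hchain
    have := card_insert_le #(limitColours γ l c S)
      (S.ssubsets.image fun S' => #(limitColours γ l c S'))
    omega
  · have hcount := card_mul_le_two_mul_card_limitColours hnew
    obtain ⟨i, rfl⟩ : ∃ i, j = i + 1 := ⟨j - 1, by omega⟩
    obtain ⟨d, hd⟩ : ∃ d, #(limitColours γ l c S) = v + i + 2 + d :=
      ⟨_, (Nat.add_sub_of_le hlt).symm⟩
    obtain ⟨t, ht⟩ : ∃ t, #S = i + 3 + t := ⟨_, (Nat.add_sub_of_le hSj).symm⟩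
    rw [hd, ht, show v + i + 2 + d - v = i + 2 + d by omega,
      show v + i + 2 + d - 1 = v + i + 1 + d by omega] at hcount
    simp only [Nat.add_sub_cancel] at hvj
    nlinarith

theorem exists_mem_limitCounts_le (hc : ∀ x y, c x y = c y x) {v w : ℕ}
    (hv : v ∈ limitCounts γ l c T)
    (hvj : 2 * v ≤ 2 + #{w ∈ limitCounts γ l c T | w ≤ v} *
      (#{w ∈ limitCounts γ l c T | w ≤ v} - 1))
    (hw : w ∈ limitCounts γ l c T) (hvw : v < w) :
    ∃ u ∈ limitCounts γ l c T, v < u ∧ u ≤ v + #{w ∈ limitCounts γ l c T | w ≤ v} := by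
  obtain ⟨S₀, hS₀, rfl⟩ := mem_image.1 hw
  obtain ⟨S, hS, hSmin⟩ := exists_min_image {S ∈ T.powerset | v < #(limitColours γ l c S)} card
    ⟨S₀, mem_filter.2 ⟨hS₀, hvw⟩⟩
  obtain ⟨hST, hvS⟩ := mem_filter.1 hS
  have hST := mem_powerset.1 hST
  have hsmall : ∀ S' ⊂ S, #(limitColours γ l c S') ≤ v := fun S' hS' => not_lt.1 fun hlt =>
    (hSmin S' (mem_filter.2 ⟨mem_powerset.2 (hS'.subset.trans hST), hlt⟩)).not_gt
      (card_lt_card hS')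
  have hne : S.Nonempty := nonempty_iff_ne_empty.2 fun h => by
    rw [h, limitColours_empty, card_singleton] at hvS
    have := one_le_of_mem_limitCounts hv
    omega
  refine ⟨_, mem_image_of_mem _ (mem_powerset.2 hST), hvS,
    card_limitColours_le hc hne hsmall (card_le_card fun u hu => ?_) hvj⟩
  obtain ⟨S', hS', rfl⟩ := mem_image.1 hu
  have hS' := mem_ssubsets.1 hS'
  exact mem_filter.2 ⟨mem_image_of_mem _ (mem_powerset.2 (hS'.subset.trans hST)), hsmall S' hS'⟩

theorem two_mul_card_limitColours_le (hc : ∀ x y, c x y = c y x) (T : Finset α) :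
    2 * #(limitColours γ l c T) ≤
      2 + #(limitCounts γ l c T) * (#(limitCounts γ l c T) - 1) := by
  have hall : {w ∈ limitCounts γ l c T | w ≤ #(limitColours γ l c T)} = limitCounts γ l c T :=
    filter_true_of_mem fun w hw => by
      obtain ⟨S, hS, rfl⟩ := mem_image.1 hw
      exact card_le_card (limitColours_mono (mem_powerset.1 hS))
  have h1 : 1 ∈ limitCounts γ l c T :=
    mem_image.2 ⟨∅, empty_mem_powerset T, by rw [limitColours_empty, card_singleton]⟩
  have := two_mul_le_of_forall_exists_le h1 (fun v hv hvj w hw hvw =>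
    exists_mem_limitCounts_le hc hv hvj hw hvw) _ (mem_image_of_mem _ (mem_powerset_self T))
  rwa [hall] at this

end LimitCounts

section Colourings

variable {Δ : ℕ → ℕ → ℕ} {k : ℕ}

theorem edgeCol_comm (Δ : ℕ → ℕ → ℕ) (x y : ℕ) : edgeCol Δ x y = edgeCol Δ y x := by
  rw [edgeCol, edgeCol, min_comm, max_comm]

theorem colourSet_mono (Δ : ℕ → ℕ → ℕ) : Monotone (colourSet Δ) :=
  fun _ _ h _ ⟨x, hx, y, hy, hxy⟩ => ⟨x, h hx, y, h hy, hxy⟩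

theorem finite_FSet (Δ : ℕ → ℕ → ℕ) (k : ℕ) : (FSet Δ k).Finite :=
  (Icc 1 k).finite_toSet.subset fun _ hm => hm.1

theorem IsColouring.colourSet_subset (hΔ : IsColouring Δ k) (X : Set ℕ) :
    colourSet Δ X ⊆ Icc 1 k := by
  rintro _ ⟨x, -, y, -, hxy, rfl⟩
  exact hΔ.1 x y hxy

theorem IsColouring.ncard_colourSet_mem_FSet (hΔ : IsColouring Δ k) {X : Set ℕ}
    (hX : X.Infinite) : (colourSet Δ X).ncard ∈ FSet Δ k := by
  have hfin := (Icc 1 k).finite_toSet.subset (hΔ.colourSet_subset X)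
  obtain ⟨x, hx, y, hy, hxy⟩ := hX.nontrivial
  refine ⟨mem_Icc.2 ⟨(Set.ncard_pos hfin).2 ⟨_, x, hx, y, hy, hxy, rfl⟩, ?_⟩, X, hX, rfl⟩
  simpa using Set.ncard_le_ncard (hΔ.colourSet_subset X)

theorem exists_finset_subset_colourSet (Δ : ℕ → ℕ → ℕ) {C : Finset ℕ}
    (hC : ∀ c ∈ C, ∃ x y, x ≠ y ∧ edgeCol Δ x y = c) : ∃ T : Finset ℕ, ↑C ⊆ colourSet Δ T := by
  choose! u v huv hc using hC
  refine ⟨C.biUnion fun c => {u c, v c}, fun c hc' => ⟨u c, ?_, v c, ?_, huv c hc', hc c hc'⟩⟩ <;>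
    simp only [coe_biUnion, Set.mem_iUnion]
  exacts [⟨c, hc', by simp⟩, ⟨c, hc', by simp⟩]

theorem colourSet_union_eq_limitColours {Y : Set ℕ} {γ : ℕ} {l : ℕ → ℕ} {S : Finset ℕ}
    (hY : Y.Infinite) (hYγ : Y.Pairwise fun x y => edgeCol Δ x y = γ)
    (hl : ∀ a ∈ S, a ∉ Y ∧ ∀ y ∈ Y, edgeCol Δ a y = l a) :
    colourSet Δ (Y ∪ S) = limitColours γ l (edgeCol Δ) S := by
  ext δ
  simp only [colourSet, Set.mem_ofPred_eq, Set.mem_union, mem_coe, mem_limitColours]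
  constructor
  · rintro ⟨x, hx | hx, y, hy | hy, hxy, rfl⟩
    · exact .inl (hYγ hx hy hxy)
    · exact .inr (.inl ⟨y, hy, ((edgeCol_comm Δ x y).trans ((hl y hy).2 x hx)).symm⟩)
    · exact .inr (.inl ⟨x, hx, ((hl x hx).2 y hy).symm⟩)
    · exact .inr (.inr ⟨x, hx, y, hy, hxy, rfl⟩)
  · rintro (rfl | ⟨x, hx, rfl⟩ | ⟨x, hx, y, hy, hxy, rfl⟩)
    · obtain ⟨x, hx, y, hy, hxy⟩ := hY.nontrivial
      exact ⟨x, .inl hx, y, .inl hy, hxy, hYγ hx hy hxy⟩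
    · obtain ⟨y, hy⟩ := hY.nonempty
      exact ⟨x, .inr hx, y, .inl hy, fun h => (hl x hx).1 (h ▸ hy), (hl x hx).2 y hy⟩
    · exact ⟨x, .inr hx, y, .inr hy, hxy, rfl⟩

theorem IsColouring.two_mul_le_ncard_FSet (hΔ : IsColouring Δ k) :
    2 * k ≤ 2 + (FSet Δ k).ncard * ((FSet Δ k).ncard - 1) := by
  obtain ⟨T, hT⟩ := exists_finset_subset_colourSet Δ hΔ.2
  obtain ⟨Y, γ, l, hY, hYγ, hl⟩ := exists_infinite_homogeneous_of_finite (edgeCol_comm Δ)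
    (Icc 1 k).finite_toSet hΔ.1 T
  have hcols : ∀ S ⊆ T, colourSet Δ (Y ∪ S) = limitColours γ l (edgeCol Δ) S := fun S hS =>
    colourSet_union_eq_limitColours hY hYγ fun a ha => hl a (hS ha)
  have hcounts : ↑(limitCounts γ l (edgeCol Δ) T) ⊆ FSet Δ k := by
    intro v hv
    obtain ⟨S, hS, rfl⟩ := mem_image.1 hv
    rw [← Set.ncard_coe_finset, ← hcols S (mem_powerset.1 hS)]
    exact hΔ.ncard_colourSet_mem_FSet (hY.mono Set.subset_union_left)
  have hT' : colourSet Δ (Y ∪ T) = Icc 1 k :=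
    subset_antisymm (hΔ.colourSet_subset _) (hT.trans (colourSet_mono Δ Set.subset_union_right))
  have hk : #(limitColours γ l (edgeCol Δ) T) = k := by
    rw [← Set.ncard_coe_finset, ← hcols T subset_rfl, hT']
    simp
  have hle := Set.ncard_le_ncard hcounts (finite_FSet Δ k)
  rw [Set.ncard_coe_finset] at hle
  calc 2 * k = 2 * #(limitColours γ l (edgeCol Δ) T) := by rw [hk]
    _ ≤ _ := two_mul_card_limitColours_le (edgeCol_comm Δ) T
    _ ≤ _ := by gcongr

end Colourings

section Construction

def smallPairs (n : ℕ) : Finset (Sym2 ℕ) :=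
  (range n).offDiag.image (Function.uncurry Sym2.mk)

noncomputable def pairIndex (n : ℕ) (q : Sym2 ℕ) : ℕ :=
  if h : q ∈ smallPairs n then (smallPairs n).equivFin ⟨q, h⟩ else 0

noncomputable def residueColouring (n x y : ℕ) : ℕ :=
  if s(x, y) ∈ smallPairs n then 3 + pairIndex n s(x, y) else if x % n = y % n then 1 else 2

variable {n x y : ℕ}

theorem mk_mem_smallPairs : s(x, y) ∈ smallPairs n ↔ x < n ∧ y < n ∧ x ≠ y := by
  simp only [smallPairs, mem_image, mem_offDiag, mem_range, Prod.exists,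
    Function.uncurry_apply_pair, Sym2.eq_iff]
  constructor
  · rintro ⟨a, b, ⟨ha, hb, hab⟩, ⟨rfl, rfl⟩ | ⟨rfl, rfl⟩⟩
    exacts [⟨ha, hb, hab⟩, ⟨hb, ha, hab.symm⟩]
  · rintro ⟨hx, hy, hxy⟩
    exact ⟨x, y, ⟨hx, hy, hxy⟩, .inl ⟨rfl, rfl⟩⟩

theorem card_smallPairs (n : ℕ) : #(smallPairs n) = n.choose 2 := by
  rw [smallPairs, Sym2.card_image_offDiag, card_range]

theorem pairIndex_lt {q : Sym2 ℕ} (hq : q ∈ smallPairs n) : pairIndex n q < n.choose 2 := by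
  rw [pairIndex, dif_pos hq, ← card_smallPairs]
  exact Fin.is_lt _

theorem pairIndex_injOn (n : ℕ) : Set.InjOn (pairIndex n) (smallPairs n) := fun q hq r hr h => by
  rw [pairIndex, pairIndex, dif_pos (mem_coe.1 hq), dif_pos (mem_coe.1 hr), Fin.val_inj] at h
  exact congrArg Subtype.val ((smallPairs n).equivFin.injective h)

theorem exists_pairIndex_eq {i : ℕ} (hi : i < n.choose 2) :
    ∃ x y, x < n ∧ y < n ∧ x ≠ y ∧ pairIndex n s(x, y) = i := by
  rw [← card_smallPairs] at hi
  set p := (smallPairs n).equivFin.symm ⟨i, hi⟩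
  have hp : pairIndex n p = i := by simp [pairIndex, p]
  obtain ⟨⟨x, y⟩, -, hxy⟩ := mem_image.1 p.2
  have hmem := p.2
  rw [← hxy] at hmem hp
  obtain ⟨hx, hy, hxy⟩ := mk_mem_smallPairs.1 hmem
  exact ⟨x, y, hx, hy, hxy, hp⟩

theorem edgeCol_residueColouring (n x y : ℕ) :
    edgeCol (residueColouring n) x y = residueColouring n x y := by
  rcases le_total x y with h | h
  · rw [edgeCol, min_eq_left h, max_eq_right h]
  · simp only [edgeCol, min_eq_right h, max_eq_left h, residueColouring, Sym2.eq_swap (a := y),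
      eq_comm (a := y % n)]

theorem residueColouring_of_lt (hx : x < n) (hy : y < n) (hxy : x ≠ y) :
    residueColouring n x y = 3 + pairIndex n s(x, y) :=
  if_pos (mk_mem_smallPairs.2 ⟨hx, hy, hxy⟩)

theorem residueColouring_of_mod_eq (h : x % n = y % n) : residueColouring n x y = 1 := by
  rw [residueColouring, if_neg, if_pos h]
  rw [mk_mem_smallPairs]
  rintro ⟨hx, hy, hxy⟩
  rw [Nat.mod_eq_of_lt hx, Nat.mod_eq_of_lt hy] at h
  exact hxy h

theorem residueColouring_of_mod_ne (h : x % n ≠ y % n) (hy : n ≤ y) :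
    residueColouring n x y = 2 := by
  rw [residueColouring, if_neg, if_neg h]
  rw [mk_mem_smallPairs]
  omega

theorem isColouring_residueColouring (hn : 2 ≤ n) :
    IsColouring (residueColouring n) (n.choose 2 + 2) := by
  refine ⟨fun x y hxy => ?_, fun c hc => ?_⟩
  · rw [edgeCol_residueColouring, residueColouring]
    split_ifs with hq
    · have := pairIndex_lt hq
      simp only [mem_Icc]
      omega
    all_goals simp
  · simp only [edgeCol_residueColouring]
    obtain ⟨hc1, hck⟩ := mem_Icc.1 hc
    rcases (show c = 1 ∨ c = 2 ∨ 3 ≤ c by omega) with rfl | rfl | hc3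
    · exact ⟨0, n, by omega, residueColouring_of_mod_eq (by simp)⟩
    · exact ⟨1, n, by omega, residueColouring_of_mod_ne (by simp [Nat.mod_eq_of_lt hn]) le_rfl⟩
    · obtain ⟨x, y, hx, hy, hxy, hi⟩ := exists_pairIndex_eq (n := n) (i := c - 3) (by omega)
      exact ⟨x, y, hxy, by rw [residueColouring_of_lt hx hy hxy, hi]; omega⟩

theorem one_mem_colourSet_residueColouring (hn : 0 < n) {X : Set ℕ} (hX : X.Infinite) :
    1 ∈ colourSet (residueColouring n) X := by
  obtain ⟨x, hx, y, hy, hxy, h⟩ := hX.exists_ne_map_eq_of_mapsTo (f := (· % n))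
    (fun x _ => Set.mem_Iio.2 (Nat.mod_lt x hn)) (Set.finite_Iio n)
  exact ⟨x, hx, y, hy, hxy, by rw [edgeCol_residueColouring, residueColouring_of_mod_eq h]⟩

theorem two_mem_colourSet_residueColouring {X : Set ℕ} (hX : X.Infinite)
    (hX₂ : ∃ x ∈ X, ∃ y ∈ X, x % n ≠ y % n) : 2 ∈ colourSet (residueColouring n) X := by
  obtain ⟨x, hx, y, hy, hxy⟩ := hX₂
  obtain ⟨z, hz, hnz⟩ := hX.exists_gt n
  obtain ⟨w, hw, hwz⟩ : ∃ w ∈ X, w % n ≠ z % n := by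
    by_cases h : x % n = z % n
    exacts [⟨y, hy, fun h' => hxy (h.trans h'.symm)⟩, ⟨x, hx, h⟩]
  exact ⟨w, hw, z, hz, fun h => hwz (h ▸ rfl),
    by rw [edgeCol_residueColouring, residueColouring_of_mod_ne hwz hnz.le]⟩

theorem colourSet_residueColouring_eq (hn : 0 < n) {X : Set ℕ} [DecidablePred (· ∈ X)]
    (hX : X.Infinite) (hX₂ : ∃ x ∈ X, ∃ y ∈ X, x % n ≠ y % n) :
    colourSet (residueColouring n) X = ↑(insert 1 (insert 2
      (({x ∈ range n | x ∈ X}.offDiag.image (Function.uncurry Sym2.mk)).image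
        fun q => 3 + pairIndex n q))) := by
  apply subset_antisymm
  · rintro _ ⟨x, hx, y, hy, hxy, rfl⟩
    rw [edgeCol_residueColouring, residueColouring]
    split_ifs with hq
    · obtain ⟨hxn, hyn, -⟩ := mk_mem_smallPairs.1 hq
      simp only [coe_insert, coe_image, Set.mem_insert_iff, Set.mem_image]
      exact .inr (.inr ⟨s(x, y), ⟨(x, y), by simp [*], rfl⟩, rfl⟩)
    all_goals simp
  · intro c hc
    simp only [coe_insert, coe_image, Set.mem_insert_iff, Set.mem_image] at hc
    rcases hc with rfl | rfl | ⟨_, ⟨⟨x, y⟩, hxy, rfl⟩, rfl⟩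
    · exact one_mem_colourSet_residueColouring hn hX
    · exact two_mem_colourSet_residueColouring hX hX₂
    · simp only [mem_coe, mem_offDiag, mem_filter, mem_range] at hxy
      obtain ⟨⟨hxn, hx⟩, ⟨hyn, hy⟩, hne⟩ := hxy
      refine ⟨x, hx, y, hy, hne, ?_⟩
      rw [edgeCol_residueColouring, residueColouring_of_lt hxn hyn hne]
      rfl

theorem colourSet_residueColouring_eq_singleton (hn : 0 < n) {X : Set ℕ} (hX : X.Infinite)
    (hX₁ : ∀ x ∈ X, ∀ y ∈ X, x % n = y % n) : colourSet (residueColouring n) X = {1} := by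
  refine subset_antisymm ?_ (Set.singleton_subset_iff.2 (one_mem_colourSet_residueColouring hn hX))
  rintro _ ⟨x, hx, y, hy, -, rfl⟩
  rw [edgeCol_residueColouring, residueColouring_of_mod_eq (hX₁ x hx y hy)]
  rfl

theorem ncard_colourSet_residueColouring (hn : 0 < n) {X : Set ℕ} (hX : X.Infinite) :
    (colourSet (residueColouring n) X).ncard = 1 ∨
      ∃ m ≤ n, (colourSet (residueColouring n) X).ncard = 2 + m.choose 2 := by
  classical
  by_cases hX₂ : ∃ x ∈ X, ∃ y ∈ X, x % n ≠ y % n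
  · right
    set S := {x ∈ range n | x ∈ X}
    have hS : S.offDiag.image (Function.uncurry Sym2.mk) ⊆ smallPairs n :=
      image_subset_image (offDiag_mono (filter_subset _ _))
    refine ⟨#S, (card_filter_le _ _).trans (card_range n).le, ?_⟩
    rw [colourSet_residueColouring_eq hn hX hX₂, Set.ncard_coe_finset,
      card_insert_of_notMem (by simp; intros; omega),
      card_insert_of_notMem (by simp; intros; omega),
      card_image_of_injOn fun q hq r hr h => pairIndex_injOn n (hS hq) (hS hr) (by simpa using h),
      Sym2.card_image_offDiag]
    omega
  · left
    push Not at hX₂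
    rw [colourSet_residueColouring_eq_singleton hn hX hX₂, Set.ncard_singleton]

theorem ncard_FSet_residueColouring_le (hn : 0 < n) (k : ℕ) :
    (FSet (residueColouring n) k).ncard ≤ n + 1 := by
  have hsub : FSet (residueColouring n) k ⊆
      ↑(insert 1 ((Icc 1 n).image fun m => 2 + m.choose 2)) := by
    rintro _ ⟨-, X, hX, rfl⟩
    rcases ncard_colourSet_residueColouring hn hX with h | ⟨m, hm, h⟩
    · simp [h]
    · -- the counts for `m = 0` and `m = 1` agree
      refine mem_insert_of_mem
        (mem_image.2 ⟨max m 1, mem_Icc.2 ⟨le_max_right _ _, max_le hm hn⟩, ?_⟩)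
      rcases Nat.eq_zero_or_pos m with rfl | hm0
      · simp [h]
      · rw [h, max_eq_left hm0]
  calc _ ≤ #(insert 1 ((Icc 1 n).image fun m => 2 + m.choose 2)) := by
        rw [← Set.ncard_coe_finset]
        exact Set.ncard_le_ncard hsub
    _ ≤ #((Icc 1 n).image fun m => 2 + m.choose 2) + 1 := card_insert_le _ _
    _ ≤ n + 1 := by gcongr; exact card_image_le.trans (by simp)

end Construction

/-- For every `n ≥ 2`, `ψ(n(n-1)/2 + 2) = n + 1`: every surjective colouring
`Δ : ℕ^(2) ↠ [n(n-1)/2 + 2]` has `|F_Δ| ≥ n + 1`, and some such colouring has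
`|F_Δ| = n + 1`. -/
theorem psi_choose_add_two (n : ℕ) (hn : 2 ≤ n) :
    (∀ Δ : ℕ → ℕ → ℕ, IsColouring Δ (n * (n - 1) / 2 + 2) →
        n + 1 ≤ (FSet Δ (n * (n - 1) / 2 + 2)).ncard) ∧
    (∃ Δ : ℕ → ℕ → ℕ, IsColouring Δ (n * (n - 1) / 2 + 2) ∧
        (FSet Δ (n * (n - 1) / 2 + 2)).ncard = n + 1) ∧
    psi (n * (n - 1) / 2 + 2) = n + 1 := by
  have lower : ∀ Δ : ℕ → ℕ → ℕ, IsColouring Δ (n * (n - 1) / 2 + 2) →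
      n + 1 ≤ (FSet Δ (n * (n - 1) / 2 + 2)).ncard := by
    intro Δ hΔ
    have hbound := hΔ.two_mul_le_ncard_FSet
    by_contra! hr
    have hr := Nat.le_of_lt_succ hr
    have hle := Nat.mul_le_mul hr (Nat.sub_le_sub_right hr 1)
    obtain ⟨t, ht⟩ := Nat.even_mul_pred_self n
    omega
  have hΔ : IsColouring (residueColouring n) (n * (n - 1) / 2 + 2) :=
    Nat.choose_two_right n ▸ isColouring_residueColouring hn
  have hF : (FSet (residueColouring n) (n * (n - 1) / 2 + 2)).ncard = n + 1 :=
    le_antisymm (ncard_FSet_residueColouring_le (by omega) _) (lower _ hΔ)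
  refine ⟨lower, ⟨_, hΔ, hF⟩, le_antisymm (Nat.sInf_le ⟨_, hΔ, hF⟩) (le_csInf ⟨_, _, hΔ, hF⟩ ?_)⟩
  rintro _ ⟨Δ, hΔ', rfl⟩
  exact lower Δ hΔ'
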